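/- arXiv:1503.04486 — 6 statements merged into one kernel-verified Lean document; each statement's English description precedes it below -/
import Mathlib

section
/- Let A be an m×n real matrix with rank(A) ≤ 3, and suppose there is a column index j₀ such that A_{i j₀} > 0 for every row i. Then there exist x, y : Fin m → ℝ and a, b, c : Fin n → ℝ such that sgn(A_{ij}) = sgn(a_j·x_i + b_j·y_i + c_j) for all i ∈ [m] and j ∈ [n]. -/
/-!
Dividing row `i` by `A i j₀ > 0` changes no sign and turns the rows into vectors `B i` of the
row space `W` (of dimension at most 3) with `B i j₀ = 1`. Hence every `B i - B i₀` lies in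
`W ∩ {v | v j₀ = 0}`, a proper subspace of `W`, so of dimension at most 2 and spanned by two
vectors `a, b`. Writing `B i - B i₀ = x i • a + y i • b` and `c = B i₀` gives
`B i j = a j * x i + b j * y i + c j`.
-/

open Module Submodule Set

theorem Real.sign_mul_of_pos_left {c a : ℝ} (hc : 0 < c) : Real.sign (c * a) = Real.sign a := by
  rcases lt_trichotomy a 0 with h | rfl | h
  · rw [sign_of_neg h, sign_of_neg (mul_neg_of_pos_of_neg hc h)]
  · simp
  · rw [sign_of_pos h, sign_of_pos (mul_pos hc h)]

namespace Submodule

variable {K V : Type*} [Field K] [AddCommGroup V] [Module K V]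

theorem exists_le_span_range_of_finrank_le (S : Submodule K V) [FiniteDimensional K S] {d : ℕ}
    (hS : finrank K S ≤ d) : ∃ u : Fin d → V, S ≤ span K (range u) := by
  let b := finBasis K S
  refine ⟨fun i => if h : (i : ℕ) < finrank K S then b ⟨i, h⟩ else 0, ?_⟩
  calc S = (⊤ : Submodule K S).map S.subtype := by simp
    _ = span K (S.subtype '' range b) := by rw [← b.span_eq, map_span]
    _ ≤ _ := by
      refine span_mono ?_
      rintro _ ⟨_, ⟨i, rfl⟩, rfl⟩
      exact ⟨Fin.castLE hS i, by simp⟩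

theorem exists_sub_smul_mem_span_of_finrank_le_succ (S : Submodule K V) [FiniteDimensional K S]
    {d : ℕ} (hS : finrank K S ≤ d + 1) (f : V →ₗ[K] K) {w : V} (hw : w ∈ S) (hfw : f w = 1) :
    ∃ u : Fin d → V, ∀ v ∈ S, v - f v • w ∈ span K (range u) := by
  have hlt : S ⊓ LinearMap.ker f < S :=
    inf_le_left.lt_of_ne fun h => one_ne_zero (hfw.symm.trans (h.ge hw).2)
  obtain ⟨u, hu⟩ := exists_le_span_range_of_finrank_le (S ⊓ LinearMap.ker f)
    (Nat.le_of_lt_succ ((finrank_lt_finrank_of_lt hlt).trans_le hS))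
  refine ⟨u, fun v hv => hu ⟨sub_mem hv (smul_mem _ _ hw), ?_⟩⟩
  simp [hfw]

end Submodule

/-- If `A` is an `m × n` real matrix of rank at most 3 with a strictly positive
column `j₀`, then there are points `(x i, y i)` and line coefficients `(a j, b j, c j)` with
`sgn (A i j) = sgn (a j * x i + b j * y i + c j)` for all `i, j`. -/
theorem stmt_1 (m n : ℕ) (A : Matrix (Fin m) (Fin n) ℝ) (hrank : A.rank ≤ 3)
    (j₀ : Fin n) (hpos : ∀ i : Fin m, 0 < A i j₀) :
    ∃ (x y : Fin m → ℝ) (a b c : Fin n → ℝ),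
      ∀ (i : Fin m) (j : Fin n),
        Real.sign (A i j) = Real.sign (a j * x i + b j * y i + c j) := by
  rcases isEmpty_or_nonempty (Fin m) with _ | ⟨⟨i₀⟩⟩
  · exact ⟨0, 0, 0, 0, 0, fun i => isEmptyElim i⟩
  let B : Fin m → Fin n → ℝ := fun i => (A i j₀)⁻¹ • A i
  have hB : ∀ i, B i j₀ = 1 := fun i => inv_mul_cancel₀ (hpos i).ne'
  have hBrow : ∀ i, B i ∈ span ℝ (range A) := fun i => smul_mem _ _ (subset_span ⟨i, rfl⟩)
  obtain ⟨u, hu⟩ := exists_sub_smul_mem_span_of_finrank_le_succ (span ℝ (range A))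
    (A.rank_eq_finrank_span_row ▸ hrank) (LinearMap.proj j₀) (hBrow i₀) (hB i₀)
  choose coeff hcoeff using fun i => (mem_span_range_iff_exists_fun ℝ).mp (hu _ (hBrow i))
  refine ⟨fun i => coeff i 0, fun i => coeff i 1, u 0, u 1, B i₀, fun i j => ?_⟩
  have hBij : B i j = u 0 j * coeff i 0 + u 1 j * coeff i 1 + B i₀ j := by
    have := congrFun (hcoeff i) j
    simp only [LinearMap.proj_apply, hB, one_smul, Fin.sum_univ_two, Pi.add_apply, Pi.sub_apply,
      Pi.smul_apply, smul_eq_mul] at this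
    linarith
  rw [← hBij]
  exact (Real.sign_mul_of_pos_left (inv_pos.mpr (hpos i))).symm
end

section
/- Let S be an m×n generalized sign pattern matrix such that some column j₀ of S has all entries equal to +1. Then minrank(S) ≤ 3 if and only if there exist points (x_i, y_i) ∈ ℝ² for i ∈ [m] and coefficients (a_j, b_j, c_j) ∈ ℝ³ for j ∈ [n] such that sgn(a_j·x_i + b_j·y_i + c_j) = S_{ij} for all i ∈ [m] and j ∈ [n]. -/
/-!
Dividing each row of a sign-realizing matrix `A` of rank at most `3` by its (positive) entry
in column `j₀` keeps the signs and the rank bound and makes column `j₀` all ones. Factor the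
result as `U * V` through `Fin 3`; the rows `p i` of `U` then lie on the affine plane
`⟪p, V.col j₀⟫ = 1`, which is a copy of `ℝ²`, and each column of `U * V` is an affine function
of the point on it.
Conversely, `a j * x i + b j * y i + c j` is the product of an `m × 3` and a `3 × n` matrix.
-/

/-- The minimum rank of a generalized sign pattern matrix `S`: the minimum of `rank A`
over all real matrices `A` whose entrywise sign equals `S`. -/
noncomputable def minrank {m n : ℕ} (S : Matrix (Fin m) (Fin n) ℝ) : ℕ :=
  sInf {r : ℕ | ∃ A : Matrix (Fin m) (Fin n) ℝ,
    (∀ i j, Real.sign (A i j) = S i j) ∧ A.rank = r}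

open Matrix

namespace Real

lemma sign_mul_of_pos {p : ℝ} (hp : 0 < p) (t : ℝ) : sign (p * t) = sign t := by
  rcases lt_trichotomy t 0 with ht | rfl | ht
  · rw [sign_of_neg ht, sign_of_neg (mul_neg_of_pos_of_neg hp ht)]
  · rw [mul_zero]
  · rw [sign_of_pos ht, sign_of_pos (mul_pos hp ht)]

lemma pos_of_sign_eq_one {t : ℝ} (h : sign t = 1) : 0 < t := by
  rcases lt_trichotomy t 0 with ht | rfl | ht
  · rw [sign_of_neg ht] at h; norm_num at h
  · rw [sign_zero] at h; norm_num at h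
  · exact ht

lemma sign_eq_self {t : ℝ} (h : t = -1 ∨ t = 0 ∨ t = 1) : sign t = t := by
  rcases h with rfl | rfl | rfl
  · exact sign_of_neg (by norm_num)
  · exact sign_zero
  · exact sign_one

end Real

namespace Matrix

variable {K : Type*} [Field K] {m n : Type*} [Fintype n]

lemma exists_mul_eq_of_rank_le (A : Matrix m n K) {k : ℕ} (h : A.rank ≤ k) :
    ∃ (U : Matrix m (Fin k) K) (V : Matrix (Fin k) n K), A = U * V := by
  set W := Submodule.span K (Set.range A.col)
  rw [rank_eq_finrank_span_cols] at h
  have : Module.Finite K W := Module.Finite.span_of_finite K (Set.finite_range _)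
  have hmem : ∀ j, A.col j ∈ W := fun j => Submodule.subset_span ⟨j, rfl⟩
  let b := Module.finBasis K W
  -- the basis of the column space, padded with zeros to a family of length `k`
  let g : Fin k → m → K := Function.extend (Fin.castLE h) (fun l => (b l : m → K)) 0
  have hcol : ∀ j, A.col j ∈ Submodule.span K (Set.range g) := by
    intro j
    have hj : A.col j = ∑ l, b.repr ⟨A.col j, hmem j⟩ l • (b l : m → K) := by
      simpa only [Submodule.coe_sum, Submodule.coe_smul] using
        congrArg Subtype.val (b.sum_repr ⟨A.col j, hmem j⟩).symm
    rw [hj]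
    refine Submodule.sum_mem _ fun l _ =>
      Submodule.smul_mem _ _ (Submodule.subset_span ⟨Fin.castLE h l, ?_⟩)
    exact (Fin.castLE_injective h).extend_apply _ _ l
  choose c hc using fun j => (Submodule.mem_span_range_iff_exists_fun K).1 (hcol j)
  refine ⟨of fun i l => g l i, of fun l j => c j l, ?_⟩
  ext i j
  rw [mul_apply]
  simpa [mul_comm] using (congrFun (hc j) i).symm

lemma rank_le_iff_exists_mul [Finite m] (A : Matrix m n K) (k : ℕ) :
    A.rank ≤ k ↔ ∃ (U : Matrix m (Fin k) K) (V : Matrix (Fin k) n K), A = U * V := by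
  refine ⟨exists_mul_eq_of_rank_le A, ?_⟩
  rintro ⟨U, V, rfl⟩
  have := Fintype.ofFinite m
  exact (rank_mul_le_left U V).trans ((rank_le_card_width U).trans (Fintype.card_fin k).le)

end Matrix

section AffinePlane

variable {K : Type*} [Field K] {m n : Type*}

lemma exists_affine_of_mul_eq_one_of_ne_zero (U : Matrix m (Fin 3) K) (V : Matrix (Fin 3) n K)
    {j₀ : n} (hone : ∀ i, (U * V) i j₀ = 1) (hv : V 2 j₀ ≠ 0) :
    ∃ (x y : m → K) (a b c : n → K), ∀ i j, (U * V) i j = a j * x i + b j * y i + c j := by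
  refine ⟨fun i => U i 0, fun i => U i 1, fun j => V 0 j - V 0 j₀ * V 2 j / V 2 j₀,
    fun j => V 1 j - V 1 j₀ * V 2 j / V 2 j₀, fun j => V 2 j / V 2 j₀, fun i j => ?_⟩
  have h := hone i
  simp only [mul_apply, Fin.sum_univ_three] at h ⊢
  have hU2 : U i 2 = (1 - U i 0 * V 0 j₀ - U i 1 * V 1 j₀) / V 2 j₀ := by
    rw [eq_div_iff hv]; linear_combination h
  rw [hU2]
  ring

lemma exists_affine_of_mul_eq_one (U : Matrix m (Fin 3) K) (V : Matrix (Fin 3) n K)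
    {j₀ : n} (hone : ∀ i, (U * V) i j₀ = 1) :
    ∃ (x y : m → K) (a b c : n → K), ∀ i j, (U * V) i j = a j * x i + b j * y i + c j := by
  by_cases hv : ∃ k, V k j₀ ≠ 0
  · obtain ⟨k₀, hk₀⟩ := hv
    let σ := Equiv.swap k₀ 2
    have hUV : U.submatrix id σ * V.submatrix σ id = U * V := submatrix_mul_equiv U V id σ id
    rw [← hUV] at hone ⊢
    exact exists_affine_of_mul_eq_one_of_ne_zero _ _ hone (by simpa [σ] using hk₀)
  · push Not at hv
    have : IsEmpty m := ⟨fun i => by simpa [mul_apply, hv] using hone i⟩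
    exact ⟨0, 0, 0, 0, 0, fun i => isEmptyElim i⟩

end AffinePlane

lemma minrank_le_iff {m n : ℕ} {S : Matrix (Fin m) (Fin n) ℝ}
    (hS : ∀ i j, S i j = -1 ∨ S i j = 0 ∨ S i j = 1) (r : ℕ) :
    minrank S ≤ r ↔ ∃ A : Matrix (Fin m) (Fin n) ℝ,
      (∀ i j, Real.sign (A i j) = S i j) ∧ A.rank ≤ r := by
  constructor
  · intro h
    obtain ⟨A, hA, hrank⟩ : minrank S ∈ {r : ℕ | ∃ A : Matrix (Fin m) (Fin n) ℝ,
        (∀ i j, Real.sign (A i j) = S i j) ∧ A.rank = r} :=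
      Nat.sInf_mem ⟨S.rank, S, fun i j => Real.sign_eq_self (hS i j), rfl⟩
    exact ⟨A, hA, hrank ▸ h⟩
  · rintro ⟨A, hA, hrank⟩
    exact le_trans (by unfold minrank; exact Nat.sInf_le ⟨A, hA, rfl⟩) hrank

/-- For a generalized sign pattern matrix `S` having an all-`+1` column `j₀`,
`minrank S ≤ 3` iff there are points `(x i, y i)` and line coefficients `(a j, b j, c j)`
with `sgn (a j * x i + b j * y i + c j) = S i j` for all `i, j`. -/
theorem stmt_2 (m n : ℕ) (S : Matrix (Fin m) (Fin n) ℝ)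
    (hS : ∀ i j, S i j = -1 ∨ S i j = 0 ∨ S i j = 1)
    (j₀ : Fin n) (hcol : ∀ i : Fin m, S i j₀ = 1) :
    minrank S ≤ 3 ↔
      ∃ (x y : Fin m → ℝ) (a b c : Fin n → ℝ),
        ∀ (i : Fin m) (j : Fin n),
          Real.sign (a j * x i + b j * y i + c j) = S i j := by
  rw [minrank_le_iff hS]
  constructor
  · rintro ⟨A, hsign, hrank⟩
    have hpos : ∀ i, 0 < A i j₀ := fun i =>
      Real.pos_of_sign_eq_one ((hsign i j₀).trans (hcol i))
    set B := diagonal (fun i => (A i j₀)⁻¹) * A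
    have hB : ∀ i j, B i j = (A i j₀)⁻¹ * A i j := diagonal_mul _ _
    obtain ⟨U, V, hUV⟩ := (rank_le_iff_exists_mul B 3).1 ((rank_mul_le_right _ _).trans hrank)
    obtain ⟨x, y, a, b, c, haff⟩ := exists_affine_of_mul_eq_one U V (j₀ := j₀)
      fun i => by rw [← hUV, hB, inv_mul_cancel₀ (hpos i).ne']
    refine ⟨x, y, a, b, c, fun i j => ?_⟩
    rw [← haff, ← hUV, hB, Real.sign_mul_of_pos (inv_pos.2 (hpos i)), hsign]
  · rintro ⟨x, y, a, b, c, h⟩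
    refine ⟨of fun i j => a j * x i + b j * y i + c j, h, (rank_le_iff_exists_mul _ 3).2
      ⟨of fun i k => ![x i, y i, 1] k, of fun k j => ![a j, b j, c j] k, ?_⟩⟩
    ext i j
    simp [mul_apply, Fin.sum_univ_three, mul_comm]
end

section
/- Let V be a linear subspace of ℝ^m of dimension d with d ≥ 1. Then the number of sign vectors s ∈ {-1, +1}^m (i.e., with no zero entries) realized by V is at most 2·(C(m-1, 0) + C(m-1, 1) + ⋯ + C(m-1, d-1)), where C(a, b) denotes the binomial coefficient. -/
/-!
Deletion–restriction on the last coordinate. A full sign vector realized by the projection of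
`V` that forgets the last coordinate has at most two lifts to sign vectors realized by `V`, and
if it has two, a positive combination of their realizations cancels the last coordinate, so it is
realized by the projection of `V ∩ {x_last = 0}`, of dimension `< dim V` (unless `V` lies in that
hyperplane and realizes nothing). Writing `N(m, d)` for the maximal count,
`N(m + 1, d + 1) ≤ N(m, d + 1) + N(m, d)`, and the bound `2 ∑_{k<d} C(m - 1, k)` satisfies this
recursion with equality by Pascal's rule.
-/

open Module Finset

lemma Real.sign_eq_iff_pos_mul {s : ℝ} (hs : s = -1 ∨ s = 1) (x : ℝ) :
    Real.sign x = s ↔ 0 < s * x := by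
  rcases lt_trichotomy x 0 with hx | rfl | hx
  · rcases hs with rfl | rfl <;> norm_num [Real.sign_of_neg hx, hx, hx.le]
  · rcases hs with rfl | rfl <;> norm_num
  · rcases hs with rfl | rfl <;> norm_num [Real.sign_of_pos hx, hx, hx.le]

section RealizedSigns

variable {ι : Type*}

/-- For `s i = ±1`, `sign (v i) = s i` iff `0 < s i * v i`; unlike the sign condition, this form
is stable under positive linear combinations. -/
def realizedSigns (V : Submodule ℝ (ι → ℝ)) : Set (ι → ℝ) :=
  {s | (∀ i, s i = -1 ∨ s i = 1) ∧ ∃ v ∈ V, ∀ i, 0 < s i * v i}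

lemma setOf_sign_eq_eq_realizedSigns (V : Submodule ℝ (ι → ℝ)) :
    {s : ι → ℝ | (∀ i, s i = -1 ∨ s i = 1) ∧ ∃ v ∈ V, ∀ i, Real.sign (v i) = s i} =
      realizedSigns V := by
  ext s
  refine and_congr_right fun hs => ?_
  simp only [Real.sign_eq_iff_pos_mul (hs _)]

lemma realizedSigns_finite [Finite ι] (V : Submodule ℝ (ι → ℝ)) :
    (realizedSigns V).Finite :=
  (Set.Finite.pi fun _ => (Set.finite_singleton (1 : ℝ)).insert (-1)).subset
    fun _ hs i _ => hs.1 i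

lemma realizedSigns_eq_empty_of_le_ker {V : Submodule ℝ (ι → ℝ)} (j : ι)
    (hV : V ≤ LinearMap.ker (LinearMap.proj j)) : realizedSigns V = ∅ := by
  refine Set.eq_empty_of_forall_notMem fun s ⟨_, v, hv, hpos⟩ => ?_
  have hvj : v j = 0 := hV hv
  simpa [hvj] using hpos j

end RealizedSigns

section DeleteLast

variable {m : ℕ}

noncomputable def dropLast (m : ℕ) : (Fin (m + 1) → ℝ) →ₗ[ℝ] (Fin m → ℝ) :=
  LinearMap.funLeft ℝ ℝ Fin.castSucc

lemma init_mem_realizedSigns_map_dropLast {V : Submodule ℝ (Fin (m + 1) → ℝ)}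
    {s : Fin (m + 1) → ℝ} (hs : s ∈ realizedSigns V) :
    Fin.init s ∈ realizedSigns (V.map (dropLast m)) := by
  obtain ⟨hs, v, hv, hpos⟩ := hs
  exact ⟨fun i => hs _, dropLast m v, Submodule.mem_map_of_mem hv, fun i => hpos _⟩

/-- A positive combination of the realizations of `s` and `t` cancels the last coordinate and
keeps the other signs. -/
lemma init_mem_realizedSigns_map_inf_ker {V : Submodule ℝ (Fin (m + 1) → ℝ)}
    {s t : Fin (m + 1) → ℝ} (hs : s ∈ realizedSigns V) (ht : t ∈ realizedSigns V)
    (hinit : Fin.init s = Fin.init t) (hlast : s (Fin.last m) ≠ t (Fin.last m)) :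
    Fin.init s ∈ realizedSigns
      ((V ⊓ LinearMap.ker (LinearMap.proj (Fin.last m))).map (dropLast m)) := by
  obtain ⟨hs, v, hv, hvpos⟩ := hs
  obtain ⟨ht, w, hw, hwpos⟩ := ht
  set l := Fin.last m
  have hsum : t l + s l = 0 := by
    rcases hs l with h | h <;> rcases ht l with h' | h' <;> simp_all
  set u := (t l * w l) • v + (s l * v l) • w
  have hu : u ∈ V := V.add_mem (V.smul_mem _ hv) (V.smul_mem _ hw)
  have hul : u l = 0 := by
    simp only [u, Pi.add_apply, Pi.smul_apply, smul_eq_mul]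
    linear_combination v l * w l * hsum
  refine ⟨fun i => hs _, dropLast m u, Submodule.mem_map_of_mem ⟨hu, hul⟩, fun i => ?_⟩
  have hst : s i.castSucc = t i.castSucc := congrFun hinit i
  have hvi := hvpos i.castSucc
  have hwi := hwpos i.castSucc
  rw [← hst] at hwi
  calc 0 < t l * w l * (s i.castSucc * v i.castSucc) +
        s l * v l * (s i.castSucc * w i.castSucc) :=
      add_pos (mul_pos (hwpos l) hvi) (mul_pos (hvpos l) hwi)
    _ = s i.castSucc * u i.castSucc := by
      simp only [u, Pi.add_apply, Pi.smul_apply, smul_eq_mul]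
      ring

lemma injOn_init_setOf_last_eq (c : ℝ) :
    Set.InjOn (Fin.init (α := fun _ => ℝ)) {s : Fin (m + 1) → ℝ | s (Fin.last m) = c} :=
  fun s hs t ht h => by rw [← Fin.snoc_init_self s, ← Fin.snoc_init_self t, h, hs, ht]

lemma ncard_realizedSigns_le_add (V : Submodule ℝ (Fin (m + 1) → ℝ)) :
    (realizedSigns V).ncard ≤ (realizedSigns (V.map (dropLast m))).ncard +
      (realizedSigns ((V ⊓ LinearMap.ker (LinearMap.proj (Fin.last m))).map
        (dropLast m))).ncard := by
  set S := realizedSigns V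
  set Spos := S ∩ {s | s (Fin.last m) = 1}
  set Sneg := S ∩ {s | s (Fin.last m) = -1}
  have hSfin : S.Finite := realizedSigns_finite V
  have hposfin : Spos.Finite := hSfin.subset Set.inter_subset_left
  have hnegfin : Sneg.Finite := hSfin.subset Set.inter_subset_left
  have hS : S ⊆ Spos ∪ Sneg := fun s hs => by
    rcases hs.1 (Fin.last m) with h | h
    · exact Or.inr ⟨hs, h⟩
    · exact Or.inl ⟨hs, h⟩
  have hunion : Fin.init '' Spos ∪ Fin.init '' Sneg ⊆ realizedSigns (V.map (dropLast m)) := by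
    rintro _ (⟨s, hs, rfl⟩ | ⟨s, hs, rfl⟩) <;> exact init_mem_realizedSigns_map_dropLast hs.1
  have hinter : Fin.init '' Spos ∩ Fin.init '' Sneg ⊆ realizedSigns
      ((V ⊓ LinearMap.ker (LinearMap.proj (Fin.last m))).map (dropLast m)) := by
    rintro _ ⟨⟨s, hs, rfl⟩, ⟨t, ht, hst⟩⟩
    refine init_mem_realizedSigns_map_inf_ker hs.1 ht.1 hst.symm ?_
    rw [hs.2, ht.2]
    norm_num
  calc S.ncard ≤ Spos.ncard + Sneg.ncard :=
        (Set.ncard_le_ncard hS (hposfin.union hnegfin)).trans (Set.ncard_union_le _ _)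
    _ = (Fin.init '' Spos).ncard + (Fin.init '' Sneg).ncard := by
        rw [((injOn_init_setOf_last_eq 1).mono Set.inter_subset_right).ncard_image,
          ((injOn_init_setOf_last_eq (-1)).mono Set.inter_subset_right).ncard_image]
    _ = (Fin.init '' Spos ∪ Fin.init '' Sneg).ncard +
          (Fin.init '' Spos ∩ Fin.init '' Sneg).ncard :=
        (Set.ncard_union_add_ncard_inter _ _ (hposfin.image _) (hnegfin.image _)).symm
    _ ≤ _ := add_le_add (Set.ncard_le_ncard hunion (realizedSigns_finite _))
        (Set.ncard_le_ncard hinter (realizedSigns_finite _))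

end DeleteLast

lemma sum_range_succ_choose_succ (n e : ℕ) :
    ∑ k ∈ range (e + 1), (n + 1).choose k =
      ∑ k ∈ range (e + 1), n.choose k + ∑ k ∈ range e, n.choose k := by
  simp only [sum_range_succ' _ e, Nat.choose_succ_succ, sum_add_distrib, Nat.choose_zero_right]
  ring

lemma ncard_realizedSigns_le (m d : ℕ) (V : Submodule ℝ (Fin (m + 1) → ℝ))
    (hV : finrank ℝ V ≤ d) :
    (realizedSigns V).ncard ≤ 2 * ∑ k ∈ range d, m.choose k := by
  induction m generalizing d with
  | zero =>
    obtain _ | e := d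
    · have hbot : V = ⊥ := Submodule.finrank_eq_zero.mp (Nat.le_zero.mp hV)
      simp [realizedSigns_eq_empty_of_le_ker 0 (hbot ▸ bot_le)]
    calc (realizedSigns V).ncard ≤ 1 + 1 :=
          (ncard_realizedSigns_le_add V).trans
            (add_le_add (Set.ncard_le_one_of_subsingleton _)
              (Set.ncard_le_one_of_subsingleton _))
      _ = _ := by simp [sum_range_succ']
  | succ n ih =>
    set K := LinearMap.ker (LinearMap.proj (Fin.last (n + 1)) : (Fin (n + 2) → ℝ) →ₗ[ℝ] ℝ)
    by_cases hVK : V ≤ K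
    · simp [realizedSigns_eq_empty_of_le_ker _ hVK]
    have hinf : finrank ℝ ↥(V ⊓ K) < d :=
      (Submodule.finrank_lt_finrank_of_lt (inf_lt_left.mpr hVK)).trans_le hV
    obtain ⟨e, rfl⟩ : ∃ e, d = e + 1 := ⟨d - 1, by omega⟩
    calc (realizedSigns V).ncard ≤ _ := ncard_realizedSigns_le_add V
      _ ≤ 2 * ∑ k ∈ range (e + 1), n.choose k + 2 * ∑ k ∈ range e, n.choose k :=
          add_le_add (ih _ _ ((Submodule.finrank_map_le _ _).trans hV))
            (ih _ _ ((Submodule.finrank_map_le _ _).trans (Nat.lt_succ_iff.mp hinf)))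
      _ = _ := by rw [sum_range_succ_choose_succ]; ring

/-- A linear subspace `V ⊆ ℝ^m` of dimension `d ≥ 1` realizes at most
`2 * (C(m-1,0) + ⋯ + C(m-1,d-1))` sign vectors with entries in `{-1, +1}`. -/
theorem stmt_4 (m d : ℕ) (hd : 1 ≤ d) (V : Submodule ℝ (Fin m → ℝ))
    (hV : Module.finrank ℝ V = d) :
    Set.ncard {s : Fin m → ℝ |
        (∀ i, s i = -1 ∨ s i = 1) ∧ ∃ v ∈ V, ∀ i, Real.sign (v i) = s i}
      ≤ 2 * ∑ k ∈ Finset.range d, Nat.choose (m - 1) k := by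
  rw [setOf_sign_eq_eq_realizedSigns]
  obtain _ | n := m
  · obtain ⟨e, rfl⟩ : ∃ e, d = e + 1 := ⟨d - 1, by omega⟩
    calc (realizedSigns V).ncard ≤ 1 := Set.ncard_le_one_of_subsingleton _
      _ ≤ _ := by simp [sum_range_succ']
  · exact ncard_realizedSigns_le n d V hV.le
end

section
/- Every 2-dimensional linear subspace V of ℝ^m realizes at most 2m distinct sign vectors in {-1, +1}^m (i.e., sign vectors with no zero entries). -/
/-!
Write `V` as the span of a basis `u, w`. Up to a positive factor every `v ∈ V` is a point of the
curve `γ θ = cos θ • u + sin θ • w`, so the sign vectors without zero entries realized by `V` are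
the sign vectors `sign ∘ γ θ` with `θ` off the zero locus of `γ`. Each coordinate of `γ` is
either identically zero (and then no such sign vector is realized) or `R cos (θ - φ)` with `R > 0`,
which vanishes at exactly two points per period, so the zero locus meets a period in at most `2m`
points. Along an arc between consecutive zeros the sign vector is constant, and
sending `θ` to the last zero before it (modulo `2π`) is injective on sign vectors.
-/

open Real Set Function

lemma Real.sign_mul_of_pos_s5 {r : ℝ} (hr : 0 < r) (x : ℝ) : sign (r * x) = sign x := by
  rcases lt_trichotomy x 0 with hx | rfl | hx
  · rw [sign_of_neg (mul_neg_of_pos_of_neg hr hx), sign_of_neg hx]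
  · rw [mul_zero]
  · rw [sign_of_pos (mul_pos hr hx), sign_of_pos hx]

lemma Real.sign_eq_sign_of_forall_ne_zero {f : ℝ → ℝ} {a b : ℝ} (hf : ContinuousOn f (uIcc a b))
    (h : ∀ x ∈ uIcc a b, f x ≠ 0) : sign (f a) = sign (f b) := by
  by_contra hne
  suffices 0 ∈ uIcc (f a) (f b) by
    obtain ⟨c, hc, hc0⟩ := intermediate_value_uIcc hf this
    exact h c hc hc0
  rcases (h a left_mem_uIcc).lt_or_gt with ha | ha <;>
    rcases (h b right_mem_uIcc).lt_or_gt with hb | hb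
  · exact absurd (by rw [sign_of_neg ha, sign_of_neg hb]) hne
  · exact mem_uIcc.2 (Or.inl ⟨ha.le, hb.le⟩)
  · exact mem_uIcc.2 (Or.inr ⟨hb.le, ha.le⟩)
  · exact absurd (by rw [sign_of_pos ha, sign_of_pos hb]) hne

lemma exists_cos_mul_add_sin_mul_eq_zero_iff {a c : ℝ} (h : a ≠ 0 ∨ c ≠ 0) :
    ∃ φ : ℝ, ∀ θ, cos θ * a + sin θ * c = 0 ↔ ∃ k : ℤ, θ = φ + k * π := by
  set z : ℂ := ⟨a, c⟩
  have hz : z ≠ 0 := fun h0 => by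
    rcases h with h | h
    · exact h (congrArg Complex.re h0)
    · exact h (congrArg Complex.im h0)
  have hnorm : 0 < ‖z‖ := norm_pos_iff.2 hz
  refine ⟨Complex.arg z + π / 2, fun θ => ?_⟩
  have hphase : cos θ * a + sin θ * c = ‖z‖ * cos (θ - Complex.arg z) := by
    rw [cos_sub]
    linear_combination (-cos θ) * Complex.norm_mul_cos_arg z - sin θ * Complex.norm_mul_sin_arg z
  rw [hphase, mul_eq_zero, or_iff_right hnorm.ne', cos_eq_zero_iff]
  refine exists_congr fun k => ?_
  constructor <;> intro hk <;> linarith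

section PeriodicCurve

variable {ι : Type*} {γ : ℝ → ι → ℝ} {p : ℝ}

def zeroLocus (γ : ℝ → ι → ℝ) : Set ℝ := {θ | ∃ i, γ θ i = 0}

lemma isClosed_zeroLocus [Finite ι] (hγ : Continuous γ) : IsClosed (zeroLocus γ) := by
  have : zeroLocus γ = ⋃ i, (fun θ => γ θ i) ⁻¹' {0} := by ext; simp [zeroLocus]
  rw [this]
  exact isClosed_iUnion_of_finite fun i =>
    isClosed_singleton.preimage ((continuous_apply i).comp hγ)

lemma exists_isGreatest_zeroLocus_inter_Iic [Finite ι] (hγ : Continuous γ) (hp : 0 < p)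
    (hper : Periodic γ p) (hZ : (zeroLocus γ).Nonempty) (θ : ℝ) :
    ∃ z, IsGreatest (zeroLocus γ ∩ Iic θ) z := by
  obtain ⟨z₀, i, hz₀⟩ := hZ
  set W := zeroLocus γ ∩ Icc (θ - p) θ
  have hWc : IsCompact W := isCompact_Icc.inter_left (isClosed_zeroLocus hγ)
  have hWne : W.Nonempty := by
    refine ⟨toIocMod hp (θ - p) z₀, ⟨i, ?_⟩, ?_⟩
    · rw [← self_sub_toIocDiv_zsmul, hper.sub_zsmul_eq, hz₀]
    · simpa using Ioc_subset_Icc_self (toIocMod_mem_Ioc hp (θ - p) z₀)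
  obtain ⟨hsZ, hsθp, hsθ⟩ := hWc.sSup_mem hWne
  refine ⟨sSup W, ⟨hsZ, hsθ⟩, fun z hz => ?_⟩
  by_cases hzp : θ - p ≤ z
  · exact le_csSup hWc.bddAbove ⟨hz.1, hzp, hz.2⟩
  · linarith

lemma sign_comp_eq_of_isGreatest (hγ : Continuous γ) {θ z x : ℝ}
    (hz : IsGreatest (zeroLocus γ ∩ Iic θ) z) (hx : x ∈ Ioc z θ) : sign ∘ γ x = sign ∘ γ θ := by
  funext i
  refine sign_eq_sign_of_forall_ne_zero ((continuous_apply i).comp hγ).continuousOn ?_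
  intro y hy hy0
  rw [uIcc_of_le hx.2] at hy
  have : y ≤ z := hz.2 ⟨⟨i, hy0⟩, hy.2⟩
  linarith [hx.1, hy.1]

lemma sign_comp_eq_of_isGreatest_of_eq_add_int_mul (hγ : Continuous γ) (hper : Periodic γ p)
    {θ θ' z z' : ℝ} (hθ : θ ∉ zeroLocus γ) (hθ' : θ' ∉ zeroLocus γ)
    (hz : IsGreatest (zeroLocus γ ∩ Iic θ) z) (hz' : IsGreatest (zeroLocus γ ∩ Iic θ') z')
    (k : ℤ) (hk : z' = z + k * p) : sign ∘ γ θ = sign ∘ γ θ' := by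
  have hzθ : z < θ := hz.1.2.lt_of_ne fun h => hθ (h ▸ hz.1.1)
  have hzθ' : z' < θ' := hz'.1.2.lt_of_ne fun h => hθ' (h ▸ hz'.1.1)
  set x := min θ (θ' - k * p)
  have hx : x ∈ Ioc z θ := ⟨lt_min hzθ (by linarith), min_le_left _ _⟩
  have hx' : x + k * p ∈ Ioc z' θ' :=
    ⟨by linarith [hx.1], by linarith [min_le_right θ (θ' - k * p)]⟩
  rw [← sign_comp_eq_of_isGreatest hγ hz hx, ← sign_comp_eq_of_isGreatest hγ hz' hx',
    hper.int_mul k x]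

theorem encard_sign_comp_image_le [Finite ι] (hγ : Continuous γ) (hp : 0 < p)
    (hper : Periodic γ p) (hZ : (zeroLocus γ).Nonempty) (F : Finset ℝ)
    (hF : ∀ θ ∈ zeroLocus γ, ∃ t ∈ F, ∃ k : ℤ, θ = t + k * p) :
    ((fun θ => sign ∘ γ θ) '' (zeroLocus γ)ᶜ).encard ≤ F.card := by
  choose z hz using exists_isGreatest_zeroLocus_inter_Iic hγ hp hper hZ
  choose! t htF k hk using fun θ => hF (z θ) (hz θ).1.1
  choose! θ hθZ hθ using fun (s : ι → ℝ) (hs : s ∈ (fun θ => sign ∘ γ θ) '' (zeroLocus γ)ᶜ) => hs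
  rw [← encard_coe_eq_coe_finsetCard]
  refine encard_le_encard_of_injOn (f := fun s => t (θ s)) (fun s _ => htF _)
    fun s hs s' hs' h => ?_
  rw [← hθ s hs, ← hθ s' hs']
  refine sign_comp_eq_of_isGreatest_of_eq_add_int_mul hγ hper (hθZ s hs) (hθZ s' hs') (hz _)
    (hz _) (k (θ s') - k (θ s)) ?_
  rw [hk (θ s), hk (θ s'), show t (θ s) = t (θ s') from h]
  push_cast
  ring

end PeriodicCurve

section CosSinCurve

variable {ι : Type*} (u w : ι → ℝ)

theorem encard_sign_comp_cos_sin_image_le [Fintype ι] [Nonempty ι] :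
    ((fun θ => sign ∘ (cos θ • u + sin θ • w)) ''
      (zeroLocus fun θ => cos θ • u + sin θ • w)ᶜ).encard ≤ 2 * Fintype.card ι := by
  classical
  set γ := fun θ : ℝ => cos θ • u + sin θ • w
  have hγ : Continuous γ := by fun_prop
  have hper : Periodic γ (2 * π) := fun θ => by simp only [γ, cos_add_two_pi, sin_add_two_pi]
  by_cases hdeg : ∃ i, u i = 0 ∧ w i = 0
  · obtain ⟨i, hu, hw⟩ := hdeg
    have : (zeroLocus γ)ᶜ = ∅ :=
      eq_empty_of_forall_notMem fun θ hθ => hθ ⟨i, by simp [γ, hu, hw]⟩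
    simp [this]
  simp only [not_exists, not_and_or] at hdeg
  choose φ hφ using fun i => exists_cos_mul_add_sin_mul_eq_zero_iff (hdeg i)
  have hzero : ∀ θ i, γ θ i = 0 ↔ ∃ k : ℤ, θ = φ i + k * π := fun θ i => hφ i θ
  set F : Finset ℝ := Finset.univ.biUnion fun i => {φ i, φ i + π}
  have hF : ∀ θ ∈ zeroLocus γ, ∃ t ∈ F, ∃ k : ℤ, θ = t + k * (2 * π) := by
    rintro θ ⟨i, hi⟩
    obtain ⟨k, rfl⟩ := (hzero θ i).1 hi
    obtain ⟨j, rfl | rfl⟩ := Int.even_or_odd' k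
    · exact ⟨φ i, Finset.mem_biUnion.2 ⟨i, Finset.mem_univ _, by simp⟩, j, by push_cast; ring⟩
    · exact ⟨φ i + π, Finset.mem_biUnion.2 ⟨i, Finset.mem_univ _, by simp⟩, j,
        by push_cast; ring⟩
  have hZ : (zeroLocus γ).Nonempty := by
    obtain i := Classical.arbitrary ι
    exact ⟨φ i, i, (hzero _ _).2 ⟨0, by simp⟩⟩
  have hFcard : F.card ≤ 2 * Fintype.card ι := calc
    F.card ≤ ∑ i, ({φ i, φ i + π} : Finset ℝ).card := Finset.card_biUnion_le
    _ ≤ ∑ _i : ι, 2 := Finset.sum_le_sum fun _ _ => Finset.card_le_two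
    _ = 2 * Fintype.card ι := by simp [mul_comm]
  exact (encard_sign_comp_image_le hγ two_pi_pos hper hZ F hF).trans (by exact_mod_cast hFcard)

lemma sign_comp_mem_image_cos_sin (x y : ℝ) {s : ι → ℝ} (hs : ∀ i, s i ≠ 0)
    (hxy : sign ∘ (x • u + y • w) = s) :
    s ∈ (fun θ => sign ∘ (cos θ • u + sin θ • w)) ''
      (zeroLocus fun θ => cos θ • u + sin θ • w)ᶜ := by
  set z : ℂ := ⟨x, y⟩
  have hpolar : x • u + y • w = ‖z‖ • (cos z.arg • u + sin z.arg • w) := by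
    rw [smul_add, smul_smul, smul_smul, Complex.norm_mul_cos_arg, Complex.norm_mul_sin_arg]
  have hs' : ∀ i, s i = sign (‖z‖ * (cos z.arg • u + sin z.arg • w) i) := fun i => by
    rw [← hxy, hpolar]; rfl
  have hne : ∀ i, ‖z‖ * (cos z.arg • u + sin z.arg • w) i ≠ 0 := fun i h0 =>
    hs i (by rw [hs' i, h0, sign_zero])
  refine ⟨z.arg, fun ⟨i, hi⟩ => hne i (by simp only at hi; rw [hi, mul_zero]), funext fun i => ?_⟩
  have hnorm : 0 < ‖z‖ := (norm_nonneg z).lt_of_ne fun h => hne i (by rw [← h, zero_mul])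
  rw [hs' i, sign_mul_of_pos_s5 hnorm]
  rfl

end CosSinCurve

/-- A 2-dimensional linear subspace `V ⊆ ℝ^m` realizes at most `2 * m`
distinct sign vectors with entries in `{-1, +1}`. -/
theorem stmt_5 (m : ℕ) (V : Submodule ℝ (Fin m → ℝ))
    (hV : Module.finrank ℝ V = 2) :
    Set.ncard {s : Fin m → ℝ |
        (∀ i, s i = -1 ∨ s i = 1) ∧ ∃ v ∈ V, ∀ i, Real.sign (v i) = s i}
      ≤ 2 * m := by
  set b := Module.finBasisOfFinrankEq ℝ V hV
  have : Nonempty (Fin m) := ⟨⟨0, by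
    have hle := V.finrank_le
    rw [hV, Module.finrank_fin_fun] at hle
    omega⟩⟩
  have hsub : {s : Fin m → ℝ | (∀ i, s i = -1 ∨ s i = 1) ∧ ∃ v ∈ V, ∀ i, sign (v i) = s i} ⊆
      (fun θ => sign ∘ (cos θ • (b 0 : Fin m → ℝ) + sin θ • (b 1 : Fin m → ℝ))) ''
        (zeroLocus fun θ => cos θ • (b 0 : Fin m → ℝ) + sin θ • (b 1 : Fin m → ℝ))ᶜ := by
    rintro s ⟨hs, v, hv, hvs⟩
    have hrepr := b.sum_repr ⟨v, hv⟩
    rw [Fin.sum_univ_two] at hrepr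
    have hv' : v = b.repr ⟨v, hv⟩ 0 • (b 0 : Fin m → ℝ) + b.repr ⟨v, hv⟩ 1 • (b 1 : Fin m → ℝ) :=
      congrArg Subtype.val hrepr.symm
    exact sign_comp_mem_image_cos_sin _ _ _ _
      (fun i => by rcases hs i with h | h <;> rw [h] <;> norm_num)
      (funext fun i => by rw [← hvs i, comp_apply, ← hv'])
  have hcount := (encard_le_encard hsub).trans (encard_sign_comp_cos_sin_image_le _ _)
  rw [Fintype.card_fin] at hcount
  exact ENat.toNat_le_of_le_natCast hcount
end

section
/- Let V be a linear subspace of ℝ^m with dim V ≤ d, and let U ⊆ [m] be a set of coordinates with |U| = d + 1. Then there exists a sign assignment s : U → {-1, +1} such that no vector v ∈ V satisfies sgn(v_i) = s_i for all i ∈ U. -/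
/-!
The coordinate functionals `v ↦ v i`, `i ∈ U`, are `d + 1` vectors in the dual of `V`, which has
dimension at most `d`; a linear relation `∑ w i v i = 0` between them holds on all of `V`. If some
`v ∈ V` had the sign of `w` on every coordinate where `w` does not vanish, each term `w i v i`
would be nonnegative and at least one positive, so the sum could not vanish. Hence the sign
pattern of `w`, completed by `+1` where `w` vanishes, is not achieved by `V`.
-/

open Module

theorem Real.mul_pos_of_sign_eq {x y : ℝ} (hy : y ≠ 0) (h : Real.sign x = Real.sign y) :
    0 < y * x := by
  have hx : x ≠ 0 := by
    rintro rfl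
    exact hy (Real.sign_eq_zero_iff.mp (h.symm.trans Real.sign_zero))
  have hpos := mul_pos (Real.sign_mul_pos_of_ne_zero y hy) (Real.sign_mul_pos_of_ne_zero x hx)
  rw [h] at hpos
  rcases Real.sign_apply_eq_of_ne_zero y hy with hs | hs <;> rw [hs] at hpos <;> linarith

theorem Finset.sum_mul_pos_of_sign_eq {ι : Type*} (U : Finset ι) {w x : ι → ℝ}
    (hw : ∃ i ∈ U, w i ≠ 0) (hsign : ∀ i ∈ U, w i ≠ 0 → Real.sign (x i) = Real.sign (w i)) :
    0 < ∑ i ∈ U, w i * x i := by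
  have hnonneg : ∀ i ∈ U, 0 ≤ w i * x i := fun i hi => by
    by_cases hwi : w i = 0
    · simp [hwi]
    · exact (Real.mul_pos_of_sign_eq hwi (hsign i hi hwi)).le
  obtain ⟨i, hi, hwi⟩ := hw
  exact Finset.sum_pos' hnonneg ⟨i, hi, Real.mul_pos_of_sign_eq hwi (hsign i hi hwi)⟩

theorem Submodule.exists_coord_relation_of_finrank_lt {K ι : Type*} [Field K]
    (V : Submodule K (ι → K)) [FiniteDimensional K V] (U : Finset ι)
    (h : finrank K V < U.card) :
    ∃ w : ι → K, (∃ i ∈ U, w i ≠ 0) ∧ ∀ v ∈ V, ∑ i ∈ U, w i * v i = 0 := by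
  let coord : ι → Dual K V := fun i => (LinearMap.proj i).comp V.subtype
  have hdep : ¬ LinearIndepOn K coord U := fun hindep => by
    have hcard := hindep.fintype_card_le_finrank
    simp only [Finset.coe_sort_coe, Fintype.card_coe, Subspace.dual_finrank_eq] at hcard
    omega
  obtain ⟨w, hsum, hw⟩ := not_linearIndepOn_finset_iff.mp hdep
  refine ⟨w, hw, fun v hv => ?_⟩
  simpa [coord] using LinearMap.congr_fun hsum ⟨v, hv⟩

/-- If `V ⊆ ℝ^m` has dimension at most `d` and `U` is a set of `d + 1`
coordinates, then there is a `{-1, +1}` sign assignment on `U` that no vector of `V`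
achieves on all coordinates of `U`. -/
theorem stmt_6 (m d : ℕ) (V : Submodule ℝ (Fin m → ℝ))
    (hV : Module.finrank ℝ V ≤ d) (U : Finset (Fin m)) (hU : U.card = d + 1) :
    ∃ s : Fin m → ℝ, (∀ i ∈ U, s i = -1 ∨ s i = 1) ∧
      ∀ v ∈ V, ¬ (∀ i ∈ U, Real.sign (v i) = s i) := by
  obtain ⟨w, hw, hrel⟩ := V.exists_coord_relation_of_finrank_lt U (by omega)
  refine ⟨fun i => if w i = 0 then 1 else Real.sign (w i), fun i _ => ?_, fun v hv hsign => ?_⟩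
  · by_cases hwi : w i = 0
    · simp [hwi]
    · simpa [hwi] using Real.sign_apply_eq_of_ne_zero (w i) hwi
  · have hpos := U.sum_mul_pos_of_sign_eq hw fun i hi hwi => by
      simpa [hwi] using hsign i hi
    exact hpos.ne' (hrel v hv)
end

section
/- Let S be an m×n generalized sign pattern matrix with no all-zero row, and suppose column j₀ of S has exactly one zero entry, at row i₀. Let C⁺ and C⁻ be the sign vectors agreeing with column j₀ at all rows i ≠ i₀, with C⁺_{i₀} = +1 and C⁻_{i₀} = -1, and let S' be the m×(n+1) generalized sign pattern matrix obtained from S by replacing column j₀ with the two columns C⁺ and C⁻. Then minrank(S') = minrank(S). -/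
lemma sign_fix {x : ℝ} (h : x = -1 ∨ x = 0 ∨ x = 1) : Real.sign x = x := by
  rcases h with h | h | h <;> subst h
  · exact Real.sign_of_neg (by norm_num)
  · exact Real.sign_zero
  · exact Real.sign_one

lemma sign_perturb {x t : ℝ} (h : |t| < |x|) : Real.sign (x + t) = Real.sign x := by
  rcases lt_trichotomy x 0 with hx | hx | hx
  · rw [Real.sign_of_neg hx, Real.sign_of_neg]
    rw [abs_of_neg hx] at h
    cases abs_lt.mp h; linarith
  · subst hx; simp at h; linarith [abs_nonneg t]
  · rw [Real.sign_of_pos hx, Real.sign_of_pos]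
    rw [abs_of_pos hx] at h
    cases abs_lt.mp h; linarith

lemma sign_combo {a b lam mu s : ℝ} (hl : 0 < lam) (hm : 0 < mu)
    (ha : Real.sign a = s) (hb : Real.sign b = s) (hs : s ≠ 0) :
    Real.sign (lam * a + mu * b) = s := by
  rcases lt_trichotomy a 0 with h | h | h
  · rw [Real.sign_of_neg h] at ha
    have hb' : b < 0 := by
      rcases lt_trichotomy b 0 with h' | h' | h'
      · exact h'
      · subst h'; rw [Real.sign_zero] at hb; rw [← ha] at hb; norm_num at hb
      · rw [Real.sign_of_pos h'] at hb; rw [← ha] at hb; norm_num at hb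
    rw [← ha, Real.sign_of_neg (by nlinarith)]
  · subst h; rw [Real.sign_zero] at ha; exact absurd ha.symm hs
  · rw [Real.sign_of_pos h] at ha
    have hb' : 0 < b := by
      rcases lt_trichotomy b 0 with h' | h' | h'
      · rw [Real.sign_of_neg h'] at hb; rw [← ha] at hb; norm_num at hb
      · subst h'; rw [Real.sign_zero] at hb; rw [← ha] at hb; norm_num at hb
      · exact h'
    rw [← ha, Real.sign_of_pos (by nlinarith)]

example (n : ℕ) (j : Fin n) : Fin.castSucc j ≠ Fin.last n := (Fin.castSucc_lt_last j).ne


open Matrix Finset Submodule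

lemma exists_expand {m n : ℕ} (A : Matrix (Fin m) (Fin n) ℝ) (i₀ : Fin m) (j₀ j₁ : Fin n)
    (hj : j₁ ≠ j₀) (h0 : A i₀ j₀ = 0) (h1 : A i₀ j₁ ≠ 0) (h2 : ∀ i, i ≠ i₀ → A i j₀ ≠ 0) :
    ∃ A' : Matrix (Fin m) (Fin (n+1)) ℝ, A'.rank = A.rank ∧
      (∀ i (j : Fin n), j ≠ j₀ → A' i (Fin.castSucc j) = A i j) ∧
      (∀ i, i ≠ i₀ → Real.sign (A' i (Fin.castSucc j₀)) = Real.sign (A i j₀)) ∧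
      (∀ i, i ≠ i₀ → Real.sign (A' i (Fin.last n)) = Real.sign (A i j₀)) ∧
      Real.sign (A' i₀ (Fin.castSucc j₀)) = 1 ∧ Real.sign (A' i₀ (Fin.last n)) = -1 := by
  have : Nonempty (Fin m) := ⟨i₀⟩
  set v : Fin m → ℝ := fun i => A i j₁ with hv
  set δ : ℝ := Finset.univ.inf' Finset.univ_nonempty
      (fun i => if i = i₀ then 1 else |A i j₀| / (|v i| + 1)) with hδ
  have hδpos : 0 < δ := by
    rw [hδ, Finset.lt_inf'_iff]
    intro i _
    by_cases hi : i = i₀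
    · simp [hi]
    · rw [if_neg hi]
      exact div_pos (abs_pos.mpr (h2 i hi)) (by positivity)
  have hδle : ∀ i, i ≠ i₀ → δ * (|v i| + 1) ≤ |A i j₀| := by
    intro i hi
    have h := Finset.inf'_le (b := i)
      (fun i => if i = i₀ then 1 else |A i j₀| / (|v i| + 1)) (Finset.mem_univ i)
    rw [if_neg hi] at h
    rw [← le_div_iff₀ (by positivity)]
    exact h
  set ε : ℝ := δ * Real.sign (v i₀) with hε
  have habsε : |ε| = δ := by
    rw [hε, abs_mul]
    rcases Real.sign_apply_eq_of_ne_zero _ h1 with h | h <;> rw [h] <;>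
      simp [abs_of_pos hδpos]
  have hεv : 0 < ε * v i₀ := by
    have h := Real.sign_mul_pos_of_ne_zero (v i₀) h1
    calc (0:ℝ) < δ * (Real.sign (v i₀) * v i₀) := mul_pos hδpos h
    _ = ε * v i₀ := by rw [hε]; ring
  have hpert : ∀ i, i ≠ i₀ → |ε * v i| < |A i j₀| := by
    intro i hi
    rw [abs_mul, habsε]
    have h := hδle i hi
    nlinarith [abs_nonneg (v i), abs_pos.mpr (h2 i hi)]
  refine ⟨Matrix.of fun i => Fin.snoc
      (Function.update (fun j => A i j) j₀ (A i j₀ + ε * v i)) (A i j₀ - ε * v i), ?_, ?_, ?_, ?_, ?_, ?_⟩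
  · -- rank equality
    set A' : Matrix (Fin m) (Fin (n+1)) ℝ := Matrix.of fun i => Fin.snoc
      (Function.update (fun j => A i j) j₀ (A i j₀ + ε * v i)) (A i j₀ - ε * v i) with hA'
    have hcol1 : ∀ j : Fin n, j ≠ j₀ → A'ᵀ (Fin.castSucc j) = Aᵀ j := by
      intro j hjj
      funext i
      simp only [hA', Matrix.transpose_apply, Matrix.of_apply, Fin.snoc_castSucc,
        Function.update_of_ne hjj]
    have hcolp : A'ᵀ (Fin.castSucc j₀) = Aᵀ j₀ + ε • Aᵀ j₁ := by
      funext i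
      simp only [hA', Matrix.transpose_apply, Matrix.of_apply, Fin.snoc_castSucc,
        Function.update_self, Pi.add_apply, Pi.smul_apply, smul_eq_mul, hv]
    have hcolm : A'ᵀ (Fin.last n) = Aᵀ j₀ - ε • Aᵀ j₁ := by
      funext i
      simp only [hA', Matrix.transpose_apply, Matrix.of_apply, Fin.snoc_last,
        Pi.sub_apply, Pi.smul_apply, smul_eq_mul, hv]
    have hspan : Submodule.span ℝ (Set.range A'ᵀ) = Submodule.span ℝ (Set.range Aᵀ) := by
      apply le_antisymm
      · rw [Submodule.span_le]
        rintro _ ⟨j, rfl⟩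
        simp only [SetLike.mem_coe]
        refine Fin.lastCases ?_ (fun j => ?_) j
        · rw [hcolm]
          exact sub_mem (subset_span ⟨j₀, rfl⟩) (smul_mem _ _ (subset_span ⟨j₁, rfl⟩))
        · by_cases hjj : j = j₀
          · rw [hjj, hcolp]
            exact add_mem (subset_span ⟨j₀, rfl⟩) (smul_mem _ _ (subset_span ⟨j₁, rfl⟩))
          · rw [hcol1 j hjj]
            exact subset_span ⟨j, rfl⟩
      · rw [Submodule.span_le]
        rintro _ ⟨j, rfl⟩
        simp only [SetLike.mem_coe]
        by_cases hjj : j = j₀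
        · rw [hjj]
          have : Aᵀ j₀ = (2⁻¹ : ℝ) • (A'ᵀ (Fin.castSucc j₀) + A'ᵀ (Fin.last n)) := by
            rw [hcolp, hcolm]
            module
          rw [this]
          exact smul_mem _ _ (add_mem (subset_span ⟨_, rfl⟩) (subset_span ⟨_, rfl⟩))
        · rw [← hcol1 j hjj]
          exact subset_span ⟨_, rfl⟩
    rw [Matrix.rank_eq_finrank_span_cols, Matrix.rank_eq_finrank_span_cols]
    change Module.finrank ℝ (span ℝ (Set.range A'ᵀ)) = Module.finrank ℝ (span ℝ (Set.range Aᵀ))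
    rw [hspan]
  · intro i j hjj
    simp only [Matrix.of_apply, Fin.snoc_castSucc, Function.update_of_ne hjj]
  · intro i hi
    simp only [Matrix.of_apply, Fin.snoc_castSucc, Function.update_self]
    exact sign_perturb (hpert i hi)
  · intro i hi
    simp only [Matrix.of_apply, Fin.snoc_last]
    rw [sub_eq_add_neg]
    exact sign_perturb (by rw [abs_neg]; exact hpert i hi)
  · simp only [Matrix.of_apply, Fin.snoc_castSucc, Function.update_self, h0, zero_add]
    exact Real.sign_of_pos hεv
  · simp only [Matrix.of_apply, Fin.snoc_last, h0, zero_sub]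
    exact Real.sign_of_neg (by linarith)

lemma exists_contract {m n : ℕ} (A' : Matrix (Fin m) (Fin (n+1)) ℝ) (i₀ : Fin m) (j₀ : Fin n)
    (hp : 0 < A' i₀ (Fin.castSucc j₀)) (hm : A' i₀ (Fin.last n) < 0)
    (hsame : ∀ i, i ≠ i₀ → Real.sign (A' i (Fin.castSucc j₀)) = Real.sign (A' i (Fin.last n)))
    (hnz : ∀ i, i ≠ i₀ → Real.sign (A' i (Fin.castSucc j₀)) ≠ 0) :
    ∃ A : Matrix (Fin m) (Fin n) ℝ, A.rank ≤ A'.rank ∧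
      (∀ i (j : Fin n), j ≠ j₀ → A i j = A' i (Fin.castSucc j)) ∧
      A i₀ j₀ = 0 ∧
      (∀ i, i ≠ i₀ → Real.sign (A i j₀) = Real.sign (A' i (Fin.castSucc j₀))) := by
  set lam : ℝ := -(A' i₀ (Fin.last n)) with hlam
  set mu : ℝ := A' i₀ (Fin.castSucc j₀) with hmu
  have hlampos : 0 < lam := by rw [hlam]; linarith
  have hmupos : 0 < mu := hp
  set A : Matrix (Fin m) (Fin n) ℝ := Matrix.of fun i j =>
    if j = j₀ then lam * A' i (Fin.castSucc j₀) + mu * A' i (Fin.last n)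
    else A' i (Fin.castSucc j) with hA
  have hAapp : ∀ i j, A i j = if j = j₀ then
      lam * A' i (Fin.castSucc j₀) + mu * A' i (Fin.last n) else A' i (Fin.castSucc j) :=
    fun i j => rfl
  refine ⟨A, ?_, ?_, ?_, ?_⟩
  · rw [Matrix.rank_eq_finrank_span_cols, Matrix.rank_eq_finrank_span_cols]
    apply Submodule.finrank_mono
    rw [Submodule.span_le]
    rintro _ ⟨j, rfl⟩
    simp only [SetLike.mem_coe]
    by_cases hjj : j = j₀
    · have : Aᵀ j = lam • A'ᵀ (Fin.castSucc j₀) + mu • A'ᵀ (Fin.last n) := by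
        funext i
        simp only [Matrix.transpose_apply, hAapp, if_pos hjj, Pi.add_apply, Pi.smul_apply,
          smul_eq_mul]
      show Aᵀ j ∈ Submodule.span ℝ (Set.range A'ᵀ)
      rw [this]
      exact add_mem (Submodule.smul_mem _ _ (Submodule.subset_span ⟨_, rfl⟩))
        (Submodule.smul_mem _ _ (Submodule.subset_span ⟨_, rfl⟩))
    · have : Aᵀ j = A'ᵀ (Fin.castSucc j) := by
        funext i
        simp only [Matrix.transpose_apply, hAapp, if_neg hjj]
      show Aᵀ j ∈ Submodule.span ℝ (Set.range A'ᵀ)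
      rw [this]
      exact Submodule.subset_span ⟨_, rfl⟩
  · intro i j hjj
    rw [hAapp, if_neg hjj]
  · rw [hAapp, if_pos rfl, hlam, hmu]; ring
  · intro i hi
    rw [hAapp, if_pos rfl]
    exact sign_combo hlampos hmupos rfl (hsame i hi).symm (hnz i hi)

lemma pos_of_sign_eq_one {x : ℝ} (h : Real.sign x = 1) : 0 < x := by
  rcases lt_trichotomy x 0 with h' | h' | h'
  · rw [Real.sign_of_neg h'] at h; norm_num at h
  · subst h'; rw [Real.sign_zero] at h; norm_num at h
  · exact h'

lemma neg_of_sign_eq_neg_one {x : ℝ} (h : Real.sign x = -1) : x < 0 := by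
  rcases lt_trichotomy x 0 with h' | h' | h'
  · exact h'
  · subst h'; rw [Real.sign_zero] at h; norm_num at h
  · rw [Real.sign_of_pos h'] at h; norm_num at h


/-- Let `S` be an `m × n` generalized sign pattern matrix with no all-zero row,
whose column `j₀` has exactly one zero entry, at row `i₀`. Let `C⁺` (resp. `C⁻`) agree with
column `j₀` away from `i₀` and have entry `+1` (resp. `-1`) at `i₀`. Then the `m × (n+1)`
matrix `S'` obtained from `S` by replacing column `j₀` with the two columns `C⁺` and `C⁻`
(here: `C⁺` at position `j₀` and `C⁻` appended last) satisfies `minrank S' = minrank S`. -/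
theorem stmt_13 (m n : ℕ) (S : Matrix (Fin m) (Fin n) ℝ)
    (hS : ∀ i j, S i j = -1 ∨ S i j = 0 ∨ S i j = 1)
    (hrow : ∀ i : Fin m, ∃ j : Fin n, S i j ≠ 0)
    (j₀ : Fin n) (i₀ : Fin m)
    (hz : S i₀ j₀ = 0) (honez : ∀ i : Fin m, i ≠ i₀ → S i j₀ ≠ 0)
    (Cplus Cminus : Fin m → ℝ)
    (hCp : Cplus i₀ = 1 ∧ ∀ i ≠ i₀, Cplus i = S i j₀)
    (hCm : Cminus i₀ = -1 ∧ ∀ i ≠ i₀, Cminus i = S i j₀)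
    (S' : Matrix (Fin m) (Fin (n + 1)) ℝ)
    (hS' : ∀ i : Fin m,
      S' i = Fin.snoc (Function.update (fun j : Fin n => S i j) j₀ (Cplus i)) (Cminus i)) :
    minrank S' = minrank S := by
  obtain ⟨hCp1, hCp2⟩ := hCp
  obtain ⟨hCm1, hCm2⟩ := hCm
  apply le_antisymm
  · -- minrank S' ≤ minrank S
    have hne : {r : ℕ | ∃ A : Matrix (Fin m) (Fin n) ℝ,
        (∀ i j, Real.sign (A i j) = S i j) ∧ A.rank = r}.Nonempty :=
      ⟨S.rank, S, fun i j => sign_fix (hS i j), rfl⟩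
    obtain ⟨A, hAs, hAr⟩ := Nat.sInf_mem hne
    obtain ⟨j₁, hj₁⟩ := hrow i₀
    have hj₁0 : j₁ ≠ j₀ := fun h => hj₁ (h ▸ hz)
    have h0 : A i₀ j₀ = 0 := Real.sign_eq_zero_iff.mp (by rw [hAs i₀ j₀, hz])
    have h1 : A i₀ j₁ ≠ 0 := fun h => hj₁ (by rw [← hAs i₀ j₁, h, Real.sign_zero])
    have h2 : ∀ i, i ≠ i₀ → A i j₀ ≠ 0 :=
      fun i hi h => honez i hi (by rw [← hAs i j₀, h, Real.sign_zero])
    obtain ⟨A', hrank, hcopy, hsp, hsm, hspi, hsmi⟩ := exists_expand A i₀ j₀ j₁ hj₁0 h0 h1 h2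
    have hsigns : ∀ i j, Real.sign (A' i j) = S' i j := by
      intro i j
      rw [hS' i]
      refine Fin.lastCases ?_ (fun j => ?_) j
      · rw [Fin.snoc_last]
        by_cases hi : i = i₀
        · subst hi; rw [hCm1]; exact hsmi
        · rw [hCm2 i hi, hsm i hi, hAs i j₀]
      · rw [Fin.snoc_castSucc]
        by_cases hjj : j = j₀
        · rw [hjj, Function.update_self]
          by_cases hi : i = i₀
          · subst hi; rw [hCp1]; exact hspi
          · rw [hCp2 i hi, hsp i hi, hAs i j₀]
        · rw [Function.update_of_ne hjj, hcopy i j hjj, hAs i j]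
    calc minrank S' ≤ A'.rank := Nat.sInf_le ⟨A', hsigns, rfl⟩
    _ = A.rank := hrank
    _ = minrank S := hAr
  · -- minrank S ≤ minrank S'
    have hS'v : ∀ i j, S' i j = -1 ∨ S' i j = 0 ∨ S' i j = 1 := by
      intro i j; rw [hS' i]
      refine Fin.lastCases ?_ (fun j => ?_) j
      · rw [Fin.snoc_last]
        by_cases hi : i = i₀
        · subst hi; rw [hCm1]; left; rfl
        · rw [hCm2 i hi]; exact hS i j₀
      · rw [Fin.snoc_castSucc]
        by_cases hjj : j = j₀
        · rw [hjj, Function.update_self]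
          by_cases hi : i = i₀
          · subst hi; rw [hCp1]; right; right; rfl
          · rw [hCp2 i hi]; exact hS i j₀
        · rw [Function.update_of_ne hjj]; exact hS i j
    have hne' : {r : ℕ | ∃ A : Matrix (Fin m) (Fin (n+1)) ℝ,
        (∀ i j, Real.sign (A i j) = S' i j) ∧ A.rank = r}.Nonempty :=
      ⟨S'.rank, S', fun i j => sign_fix (hS'v i j), rfl⟩
    obtain ⟨A', hA's, hA'r⟩ := Nat.sInf_mem hne'
    have hS'p : ∀ i, S' i (Fin.castSucc j₀) = Cplus i := by
      intro i; rw [hS' i, Fin.snoc_castSucc, Function.update_self]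
    have hS'm : ∀ i, S' i (Fin.last n) = Cminus i := by
      intro i; rw [hS' i, Fin.snoc_last]
    have hp : 0 < A' i₀ (Fin.castSucc j₀) :=
      pos_of_sign_eq_one (by rw [hA's, hS'p, hCp1])
    have hm : A' i₀ (Fin.last n) < 0 :=
      neg_of_sign_eq_neg_one (by rw [hA's, hS'm, hCm1])
    have hsame : ∀ i, i ≠ i₀ →
        Real.sign (A' i (Fin.castSucc j₀)) = Real.sign (A' i (Fin.last n)) := by
      intro i hi; rw [hA's, hA's, hS'p, hS'm, hCp2 i hi, hCm2 i hi]
    have hnz : ∀ i, i ≠ i₀ → Real.sign (A' i (Fin.castSucc j₀)) ≠ 0 := by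
      intro i hi; rw [hA's, hS'p, hCp2 i hi]; exact honez i hi
    obtain ⟨A, hrank, hcopy, h0, hsgn⟩ := exists_contract A' i₀ j₀ hp hm hsame hnz
    have hsigns : ∀ i j, Real.sign (A i j) = S i j := by
      intro i j
      by_cases hjj : j = j₀
      · subst hjj
        by_cases hi : i = i₀
        · subst hi; rw [h0, Real.sign_zero, hz]
        · rw [hsgn i hi, hA's, hS'p, hCp2 i hi]
      · rw [hcopy i j hjj, hA's, hS' i, Fin.snoc_castSucc, Function.update_of_ne hjj]
    calc minrank S ≤ A.rank := Nat.sInf_le ⟨A, hsigns, rfl⟩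
    _ ≤ A'.rank := hrank
    _ = minrank S' := hA'r
end
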